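/- arXiv:0901.4405 — 9 statements merged into one kernel-verified Lean document; each statement's English description precedes it below -/
import Mathlib

section
/- A bitopological space (X, τ₁, τ₂) is ij-weakly Lindelöf if and only if for every family {C_α : α ∈ Δ} of i-closed subsets of X such that every countable subfamily {C_{α_n} : n ∈ ℕ} has nonempty j-interior of its intersection, the full intersection ⋂_{α∈Δ} C_α is nonempty. -/
open Set Topology

universe u

variable {X : Type u}

/-- `X` with topologies `t1`, `t2` is ij-weakly Lindelöf: every `t1`-open cover admits a
countable subfamily whose union is `t2`-dense. -/
def IjWeaklyLindelof (t1 t2 : TopologicalSpace X) : Prop :=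
  ∀ {ι : Type u} (U : ι → Set X), (∀ a, IsOpen[t1] (U a)) → (⋃ a, U a) = Set.univ →
    ∃ s : Set ι, s.Countable ∧ @closure X t2 (⋃ a ∈ s, U a) = Set.univ

theorem stmt1 (t1 t2 : TopologicalSpace X) :
    IjWeaklyLindelof t1 t2 ↔
      ∀ {ι : Type u} (C : ι → Set X), (∀ a, IsClosed[t1] (C a)) →
        (∀ s : Set ι, s.Countable → @interior X t2 (⋂ a ∈ s, C a) ≠ ∅) →
        (⋂ a, C a) ≠ ∅ := by
  constructor
  · intro h ι C hC hcount hempty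
    obtain ⟨s, hs, hcl⟩ := h (fun a => (C a)ᶜ) (fun a => (hC a).isOpen_compl)
      (by rw [← compl_iInter, hempty, compl_empty])
    apply hcount s hs
    have : (⋂ a ∈ s, C a) = (⋃ a ∈ s, (C a)ᶜ)ᶜ := by
      simp [compl_iUnion]
    rw [this, interior_compl, hcl, compl_univ]
  · intro h ι U hU hcov
    by_contra hcon
    push_neg at hcon
    have hC : ∀ a, IsClosed[t1] (U a)ᶜ := fun a => @IsOpen.isClosed_compl X t1 (U a) (hU a)
    have := h (fun a => (U a)ᶜ) hC ?_
    · apply this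
      rw [← compl_iUnion, hcov, compl_univ]
    · intro s hs
      have : (⋂ a ∈ s, (U a)ᶜ) = (⋃ a ∈ s, U a)ᶜ := by
        simp [compl_iUnion]
      rw [this, interior_compl]
      simpa [compl_empty_iff] using hcon s hs
end

section
/- If a bitopological space X is ij-semiregular and every cover of X by ij-regular open sets admits a countable subfamily with τ_j-dense union, then X is ij-weakly Lindelöf. -/
open Set Topology

universe u

variable {X : Type u}

/-- `S` is ij-regular open: `S = i-int(j-cl(S))`. -/
def IjRegularOpen (t1 t2 : TopologicalSpace X) (S : Set X) : Prop :=
  @interior X t1 (@closure X t2 S) = S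

/-- `S` is ij-regular closed: `S = i-cl(j-int(S))`. -/
def IjRegularClosed (t1 t2 : TopologicalSpace X) (S : Set X) : Prop :=
  @closure X t1 (@interior X t2 S) = S

/-- `X` is ij-semiregular (pointwise form). -/
def IjSemiregular (t1 t2 : TopologicalSpace X) : Prop :=
  ∀ x : X, ∀ V : Set X, IsOpen[t1] V → x ∈ V →
    ∃ U : Set X, IsOpen[t1] U ∧ x ∈ U ∧ U ⊆ @interior X t1 (@closure X t2 U) ∧
      @interior X t1 (@closure X t2 U) ⊆ V

theorem ijRegularOpen_interior_closure (t1 t2 : TopologicalSpace X) (S : Set X) :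
    IjRegularOpen t1 t2 (@interior X t1 (@closure X t2 S)) := by
  apply subset_antisymm
  · refine @interior_mono X t1 _ _ ?_
    exact @closure_minimal X t2 _ _ (@interior_subset X t1 _) (@isClosed_closure X t2 _)
  · exact @interior_maximal X t1 _ _ (@subset_closure X t2 _) (@isOpen_interior X t1 _)

theorem IjSemiregular.exists_ijRegularOpen_mem_subset {t1 t2 : TopologicalSpace X}
    (hsr : IjSemiregular t1 t2) {x : X} {V : Set X} (hV : IsOpen[t1] V) (hx : x ∈ V) :
    ∃ W, IjRegularOpen t1 t2 W ∧ x ∈ W ∧ W ⊆ V := by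
  obtain ⟨U, -, hxU, hU, hUV⟩ := hsr x V hV hx
  exact ⟨_, ijRegularOpen_interior_closure t1 t2 U, hU hxU, hUV⟩

theorem stmt4 (t1 t2 : TopologicalSpace X) (hsr : IjSemiregular t1 t2)
    (h : ∀ {ι : Type u} (U : ι → Set X), (∀ a, IjRegularOpen t1 t2 (U a)) →
        (⋃ a, U a) = Set.univ →
        ∃ s : Set ι, s.Countable ∧ @closure X t2 (⋃ a ∈ s, U a) = Set.univ) :
    IjWeaklyLindelof t1 t2 := by
  intro ι U hUopen hUcov
  have hcover (x : X) : ∃ a, x ∈ U a := mem_iUnion.1 (hUcov ▸ mem_univ x)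
  choose a ha using hcover
  have hrefine (x : X) : ∃ W, IjRegularOpen t1 t2 W ∧ x ∈ W ∧ W ⊆ U (a x) :=
    hsr.exists_ijRegularOpen_mem_subset (hUopen (a x)) (ha x)
  choose W hWreg hxW hWU using hrefine
  obtain ⟨s, hs, hdense⟩ := h W hWreg (eq_univ_of_forall fun x => mem_iUnion.2 ⟨x, hxW x⟩)
  refine ⟨a '' s, hs.image a, eq_univ_of_univ_subset ?_⟩
  rw [← hdense, biUnion_image]
  exact @closure_mono X t2 _ _ (iUnion₂_mono fun x _ => hWU x)
end

section
/- If a bitopological space X is j-separable, then X is ij-weakly Lindelöf. -/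
open Set Topology

universe u

variable {X : Type u}

theorem Set.Countable.exists_countable_subcover {ι : Type*} {D : Set X} (hD : D.Countable)
    (U : ι → Set X) (hDU : D ⊆ ⋃ a, U a) :
    ∃ s : Set ι, s.Countable ∧ D ⊆ ⋃ a ∈ s, U a := by
  have hcover : ∀ x : D, ∃ a, (x : X) ∈ U a := fun x ↦ mem_iUnion.1 (hDU x.2)
  choose f hf using hcover
  have : Countable D := hD.to_subtype
  exact ⟨range f, countable_range f, fun x hx ↦ mem_biUnion (mem_range_self ⟨x, hx⟩) (hf ⟨x, hx⟩)⟩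

theorem stmt5 (t1 t2 : TopologicalSpace X)
    (hsep : ∃ D : Set X, D.Countable ∧ @closure X t2 D = Set.univ) :
    IjWeaklyLindelof t1 t2 := by
  let _ : TopologicalSpace X := t2
  obtain ⟨D, hDc, hDdense⟩ := hsep
  intro ι U _ hcover
  obtain ⟨s, hs, hDs⟩ := hDc.exists_countable_subcover U (hcover ▸ subset_univ D)
  exact ⟨s, hs, ((dense_iff_closure_eq.2 hDdense).mono hDs).closure_eq⟩
end

section
/- In an ij-weak P-space, the ij-almost Lindelöf property and the ij-weakly Lindelöf property are equivalent. -/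
open Set Topology

universe u

variable {X : Type u}

/-- `X` is ij-almost Lindelöf: every `t1`-open cover admits a countable subfamily whose
`t2`-closures cover `X`. -/
def IjAlmostLindelof (t1 t2 : TopologicalSpace X) : Prop :=
  ∀ {ι : Type u} (U : ι → Set X), (∀ a, IsOpen[t1] (U a)) → (⋃ a, U a) = Set.univ →
    ∃ s : Set ι, s.Countable ∧ (⋃ a ∈ s, @closure X t2 (U a)) = Set.univ

/-- `X` is an ij-weak P-space: `t2`-closure commutes with countable unions of `t1`-open sets. -/
def IjWeakPSpace (t1 t2 : TopologicalSpace X) : Prop :=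
  ∀ U : ℕ → Set X, (∀ n, IsOpen[t1] (U n)) →
    @closure X t2 (⋃ n, U n) = ⋃ n, @closure X t2 (U n)

namespace IjWeakPSpace

variable {t1 t2 : TopologicalSpace X}

theorem closure_iUnion {ι : Type*} [Countable ι] (hP : IjWeakPSpace t1 t2) (U : ι → Set X)
    (hU : ∀ i, IsOpen[t1] (U i)) : closure[t2] (⋃ i, U i) = ⋃ i, closure[t2] (U i) := by
  cases isEmpty_or_nonempty ι
  · simp
  · obtain ⟨f, hf⟩ := exists_surjective_nat ι
    rw [← hf.iUnion_comp, ← hf.iUnion_comp]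
    exact hP (fun n => U (f n)) fun n => hU (f n)

theorem closure_biUnion {ι : Type*} {s : Set ι} (hP : IjWeakPSpace t1 t2) (hs : s.Countable)
    (U : ι → Set X) (hU : ∀ i, IsOpen[t1] (U i)) :
    closure[t2] (⋃ i ∈ s, U i) = ⋃ i ∈ s, closure[t2] (U i) := by
  have : Countable s := hs.to_subtype
  simpa only [biUnion_eq_iUnion] using hP.closure_iUnion (fun i : s => U i) (fun i => hU i)

end IjWeakPSpace

theorem IjAlmostLindelof.ijWeaklyLindelof {t1 t2 : TopologicalSpace X}
    (h : IjAlmostLindelof t1 t2) : IjWeaklyLindelof t1 t2 := by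
  intro ι U hU hcov
  obtain ⟨s, hs, hcl⟩ := h U hU hcov
  refine ⟨s, hs, univ_subset_iff.mp ?_⟩
  rw [← hcl]
  exact iUnion₂_subset fun a ha => closure_mono (subset_biUnion_of_mem ha)

theorem stmt7 (t1 t2 : TopologicalSpace X) (hP : IjWeakPSpace t1 t2) :
    IjAlmostLindelof t1 t2 ↔ IjWeaklyLindelof t1 t2 := by
  refine ⟨IjAlmostLindelof.ijWeaklyLindelof, fun h ι U hU hcov => ?_⟩
  obtain ⟨s, hs, hdense⟩ := h U hU hcov
  exact ⟨s, hs, hP.closure_biUnion hs U hU ▸ hdense⟩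
end

section
/- An ij-weakly Lindelöf, ij-almost regular, ij-weak P-space is ij-nearly Lindelöf. -/
open Set Topology

universe u

variable {X : Type u}

/-- `X` is ij-almost regular. -/
def IjAlmostRegular (t1 t2 : TopologicalSpace X) : Prop :=
  ∀ x : X, ∀ V : Set X, IjRegularOpen t1 t2 V → x ∈ V →
    ∃ U : Set X, IsOpen[t1] U ∧ x ∈ U ∧ @closure X t2 U ⊆ V

/-- `X` is ij-nearly Lindelöf. -/
def IjNearlyLindelof (t1 t2 : TopologicalSpace X) : Prop :=
  ∀ {ι : Type u} (U : ι → Set X), (∀ a, IsOpen[t1] (U a)) → (⋃ a, U a) = Set.univ →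
    ∃ s : Set ι, s.Countable ∧
      (⋃ a ∈ s, @interior X t1 (@closure X t2 (U a))) = Set.univ


section Helpers
variable {X : Type u}

lemma clMono (t : TopologicalSpace X) {s u : Set X} (h : s ⊆ u) :
    @closure X t s ⊆ @closure X t u := by letI := t; exact closure_mono h

lemma intMono (t : TopologicalSpace X) {s u : Set X} (h : s ⊆ u) :
    @interior X t s ⊆ @interior X t u := by letI := t; exact interior_mono h

lemma subsetCl (t : TopologicalSpace X) (s : Set X) : s ⊆ @closure X t s := by
  letI := t; exact subset_closure

lemma intSubset (t : TopologicalSpace X) (s : Set X) : @interior X t s ⊆ s := by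
  letI := t; exact interior_subset

lemma clCl (t : TopologicalSpace X) (s : Set X) :
    @closure X t (@closure X t s) = @closure X t s := by
  letI := t; exact closure_closure

lemma intMaximal (t : TopologicalSpace X) {s u : Set X} (h1 : u ⊆ s)
    (h2 : IsOpen[t] u) : u ⊆ @interior X t s := by
  letI := t; exact interior_maximal h1 h2

lemma isOpenInt (t : TopologicalSpace X) (s : Set X) : IsOpen[t] (@interior X t s) := by
  letI := t; exact isOpen_interior

lemma clEmpty (t : TopologicalSpace X) : @closure X t (∅ : Set X) = ∅ := by
  letI := t; exact closure_empty

end Helpers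

theorem stmt8 (t1 t2 : TopologicalSpace X) (hW : IjWeaklyLindelof t1 t2)
    (hAR : IjAlmostRegular t1 t2) (hP : IjWeakPSpace t1 t2) :
    IjNearlyLindelof t1 t2 := by
  intro ι U hU hcov
  -- each U a is contained in its ij-regular open hull
  have hsub : ∀ a, U a ⊆ @interior X t1 (@closure X t2 (U a)) := fun a =>
    intMaximal t1 (subsetCl t2 _) (hU a)
  have hro : ∀ a, IjRegularOpen t1 t2 (@interior X t1 (@closure X t2 (U a))) := by
    intro a
    apply subset_antisymm
    · have h1 : @closure X t2 (@interior X t1 (@closure X t2 (U a))) ⊆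
          @closure X t2 (U a) := by
        have := clMono t2 (intSubset t1 (@closure X t2 (U a)))
        simpa [clCl] using this
      exact intMono t1 h1
    · exact intMaximal t1 (subsetCl t2 _) (isOpenInt t1 _)
  -- choose index for each point
  have hx : ∀ x : X, ∃ a, x ∈ U a := fun x => by
    have : x ∈ ⋃ a, U a := hcov ▸ mem_univ x
    simpa using this
  choose f hf using hx
  -- almost regularity gives t1-open W x with t2-closure inside the hull
  have hARx : ∀ x : X, ∃ Wx : Set X, IsOpen[t1] Wx ∧ x ∈ Wx ∧
      @closure X t2 Wx ⊆ @interior X t1 (@closure X t2 (U (f x))) := fun x =>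
    hAR x _ (hro (f x)) (hsub (f x) (hf x))
  choose W hWopen hWmem hWcl using hARx
  have hWcov : (⋃ x, W x) = Set.univ :=
    eq_univ_of_forall fun x => mem_iUnion.2 ⟨x, hWmem x⟩
  obtain ⟨s, hs, hsd⟩ := hW W hWopen hWcov
  refine ⟨f '' s, hs.image f, ?_⟩
  rcases s.eq_empty_or_nonempty with rfl | hne
  · simp only [biUnion_empty, clEmpty] at hsd
    rw [image_empty, biUnion_empty]
    exact hsd
  · obtain ⟨g, rfl⟩ := hs.exists_eq_range hne
    have hre : (⋃ x ∈ range g, W x) = ⋃ n, W (g n) := by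
      rw [biUnion_range]
    rw [hre] at hsd
    have hP' := hP (fun n => W (g n)) (fun n => hWopen (g n))
    rw [hP'] at hsd
    apply eq_univ_of_univ_subset
    rw [← hsd]
    apply iUnion_subset
    intro n
    refine (hWcl (g n)).trans ?_
    exact subset_biUnion_of_mem (u := fun a => @interior X t1 (@closure X t2 (U a))) (mem_image_of_mem f (mem_range_self n))
end

section
/- An ij-weakly Lindelöf, ij-regular, ij-weak P-space is i-Lindelöf (i.e., (X, τ_i) is a Lindelöf topological space). -/
open Set Topology

universe u

variable {X : Type u}

/-- `X` is ij-regular. -/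
def IjRegular (t1 t2 : TopologicalSpace X) : Prop :=
  ∀ x : X, ∀ V : Set X, IsOpen[t1] V → x ∈ V →
    ∃ U : Set X, IsOpen[t1] U ∧ x ∈ U ∧ @closure X t2 U ⊆ V

theorem stmt9 (t1 t2 : TopologicalSpace X) (hW : IjWeaklyLindelof t1 t2)
    (hR : IjRegular t1 t2) (hP : IjWeakPSpace t1 t2) :
    @LindelofSpace X t1 := by
  letI := t1
  by_cases hX : Nonempty X
  · refine ⟨isLindelof_of_countable_subcover ?_⟩
    intro ι U hUo hUc
    -- choose for each x an index and a regular neighborhood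
    have hx : ∀ x : X, ∃ a, x ∈ U a := fun x => mem_iUnion.1 (hUc (mem_univ x))
    choose a ha using hx
    have hreg : ∀ x : X, ∃ V : Set X, IsOpen[t1] V ∧ x ∈ V ∧ @closure X t2 V ⊆ U (a x) :=
      fun x => hR x (U (a x)) (hUo (a x)) (ha x)
    choose V hVo hVx hVc using hreg
    have hcov : (⋃ x, V x) = univ := eq_univ_of_forall fun x => mem_iUnion.2 ⟨x, hVx x⟩
    obtain ⟨s, hs, hdense⟩ := hW V hVo hcov
    have hsne : s.Nonempty := by
      rcases Set.eq_empty_or_nonempty s with h | h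
      · exfalso
        rw [h] at hdense
        simp only [mem_empty_iff_false, iUnion_of_empty, iUnion_empty, closure_empty] at hdense
        exact (hdense ▸ (mem_univ hX.some) : hX.some ∈ (∅ : Set X))
      · exact h
    obtain ⟨f, hf⟩ := hs.exists_eq_range hsne
    have hunion : (⋃ x ∈ s, V x) = ⋃ n, V (f n) := by
      rw [hf]; exact biUnion_range
    rw [hunion, hP (fun n => V (f n)) (fun n => hVo (f n))] at hdense
    refine ⟨Set.range (fun n => a (f n)), countable_range _, ?_⟩
    intro x _
    have : x ∈ ⋃ n, @closure X t2 (V (f n)) := hdense ▸ mem_univ x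
    obtain ⟨n, hn⟩ := mem_iUnion.1 this
    exact mem_iUnion₂.2 ⟨a (f n), ⟨n, rfl⟩, hVc (f n) hn⟩
  · have : IsEmpty X := not_nonempty_iff.1 hX
    exact ⟨isLindelof_of_countable_subcover
      (fun U _ _ => ⟨∅, countable_empty, fun x _ => (IsEmpty.false x).elim⟩)⟩
end

section
/- If a subset A of a bitopological space X is ij-weakly Lindelöf (as a subspace with the induced bitopology), then A is ij-weakly Lindelöf relative to X. -/
open Set Topology

universe u

variable {X : Type u}

/-- `S` is ij-weakly Lindelöf relative to `X`. -/
def IjRelWeaklyLindelof (t1 t2 : TopologicalSpace X) (S : Set X) : Prop :=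
  ∀ {ι : Type u} (U : ι → Set X), (∀ a, IsOpen[t1] (U a)) → S ⊆ ⋃ a, U a →
    ∃ s : Set ι, s.Countable ∧ S ⊆ @closure X t2 (⋃ a ∈ s, U a)

theorem stmt13 (t1 t2 : TopologicalSpace X) (A : Set X)
    (h : IjWeaklyLindelof (t1.induced (Subtype.val : A → X))
          (t2.induced (Subtype.val : A → X))) :
    IjRelWeaklyLindelof t1 t2 A := by
  intro ι U hU hcov
  set V : ι → Set A := fun a => (Subtype.val : A → X) ⁻¹' (U a) with hV
  have hVopen : ∀ a, IsOpen[t1.induced (Subtype.val : A → X)] (V a) := fun a =>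
    ⟨U a, hU a, rfl⟩
  have hVcov : (⋃ a, V a) = Set.univ := by
    ext x
    simp only [mem_iUnion, mem_univ, iff_true]
    obtain ⟨a, ha⟩ := mem_iUnion.mp (hcov x.2)
    exact ⟨a, ha⟩
  obtain ⟨s, hs, hcl⟩ := h V hVopen hVcov
  refine ⟨s, hs, fun x hx => ?_⟩
  letI := t2
  letI : TopologicalSpace A := t2.induced (Subtype.val : A → X)
  have hmem : (⟨x, hx⟩ : A) ∈ closure (⋃ a ∈ s, V a) := hcl ▸ mem_univ _
  have := (closure_subtype (p := fun y => y ∈ A)).mp hmem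
  refine closure_mono ?_ this
  rintro y ⟨z, hz, rfl⟩
  simp only [mem_iUnion] at hz ⊢
  obtain ⟨a, has, hza⟩ := hz
  exact ⟨a, has, hza⟩
end

section
/- Let A be a τ_i-open subset of a bitopological space X. Then A is ij-weakly Lindelöf as a subspace if and only if A is ij-weakly Lindelöf relative to X. -/
open Set Topology

universe u

variable {X : Type u}

theorem stmt14 (t1 t2 : TopologicalSpace X) (A : Set X) (hA : IsOpen[t1] A) :
    IjWeaklyLindelof (t1.induced (Subtype.val : A → X))
        (t2.induced (Subtype.val : A → X)) ↔
      IjRelWeaklyLindelof t1 t2 A := by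
  constructor
  · intro h ι U hU hcov
    obtain ⟨s, hs, hdense⟩ := h (fun a => (Subtype.val : A → X) ⁻¹' U a)
      (fun a => ⟨U a, hU a, rfl⟩)
      (by
        ext x
        simp only [mem_iUnion, mem_preimage, mem_univ, iff_true]
        obtain ⟨_, ⟨a, rfl⟩, hx⟩ := hcov x.2
        exact ⟨a, hx⟩)
    refine ⟨s, hs, fun x hx => ?_⟩
    have key : (⟨x, hx⟩ : A) ∈ @closure A (t2.induced _)
        (⋃ a ∈ s, (Subtype.val : A → X) ⁻¹' U a) := hdense ▸ mem_univ _
    letI := t2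
    have hind : Topology.IsInducing (Subtype.val : A → X) := ⟨rfl⟩
    rw [hind.closure_eq_preimage_closure_image] at key
    refine closure_mono ?_ key
    rintro y ⟨z, hz, rfl⟩
    simp only [mem_iUnion] at hz ⊢
    obtain ⟨a, ha, hz⟩ := hz
    exact ⟨a, ha, hz⟩
  · intro h ι V hV hcov
    have hV' : ∀ a, ∃ W, IsOpen[t1] W ∧ (Subtype.val : A → X) ⁻¹' W = V a :=
      fun a => hV a
    choose W hW hWV using hV'
    set U : ι → Set X := fun a => W a ∩ A with hUdef
    have hU : ∀ a, IsOpen[t1] (U a) := fun a => @IsOpen.inter X t1 _ _ (hW a) hA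
    have hUV : ∀ a, (Subtype.val : A → X) ⁻¹' U a = V a := by
      intro a
      rw [← hWV a]
      ext x
      simp [hUdef, x.2]
    obtain ⟨s, hs, hsub⟩ := h U hU (by
      intro x hx
      have : (⟨x, hx⟩ : A) ∈ ⋃ a, V a := hcov ▸ mem_univ _
      simp only [mem_iUnion] at this ⊢
      obtain ⟨a, ha⟩ := this
      rw [← hWV a] at ha
      exact ⟨a, ha, hx⟩)
    refine ⟨s, hs, ?_⟩
    ext x
    simp only [mem_univ, iff_true]
    have hind : Topology.IsInducing (Subtype.val : A → X) :=
      letI := t2; ⟨rfl⟩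
    rw [hind.closure_eq_preimage_closure_image]
    letI := t2
    have hx : (x : X) ∈ closure (⋃ a ∈ s, U a) := hsub x.2
    refine closure_mono ?_ hx
    rintro y hy
    simp only [mem_iUnion] at hy
    obtain ⟨a, ha, hyW, hyA⟩ := hy
    refine ⟨⟨y, hyA⟩, ?_, rfl⟩
    simp only [mem_iUnion]
    refine ⟨a, ha, ?_⟩
    rw [← hUV a]
    exact ⟨hyW, hyA⟩
end

section
/- If F is a subset of an ij-weakly Lindelöf bitopological space X that is τ_i-clopen and τ_j-open, then F is ij-weakly Lindelöf relative to X (and hence, being τ_i-open, ij-weakly Lindelöf as a subspace). -/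
open Set Topology

universe u

variable {X : Type u}

theorem aux_rel (t1 t2 : TopologicalSpace X) (hW : IjWeaklyLindelof t1 t2)
    (F : Set X) (hFc : IsClosed[t1] F) (hFo2 : IsOpen[t2] F) :
    IjRelWeaklyLindelof t1 t2 F := by
  intro ι U hU hFU
  letI := t2
  set V : Option ι → Set X := fun o => o.elim Fᶜ U with hV
  have hVo : ∀ o, IsOpen[t1] (V o) := by
    rintro (_ | a)
    · exact hFc.isOpen_compl
    · exact hU a
  have hVu : (⋃ o, V o) = univ := by
    apply eq_univ_of_forall
    intro x
    by_cases hx : x ∈ F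
    · obtain ⟨_, ⟨a, rfl⟩, hxa⟩ := hFU hx
      exact mem_iUnion.2 ⟨some a, hxa⟩
    · exact mem_iUnion.2 ⟨none, hx⟩
  obtain ⟨s, hs, hcl⟩ := hW V hVo hVu
  refine ⟨{a | some a ∈ s}, hs.preimage (Option.some_injective ι), ?_⟩
  intro x hx
  set T : Set X := ⋃ a ∈ {a | some a ∈ s}, U a with hT
  have h1 : (⋃ o ∈ s, V o) ⊆ T ∪ Fᶜ := by
    intro y hy
    simp only [mem_iUnion] at hy
    obtain ⟨o, ho, hyo⟩ := hy
    cases o with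
    | none => exact Or.inr hyo
    | some a => exact Or.inl (mem_iUnion₂.2 ⟨a, ho, hyo⟩)
  have h2 : @closure X t2 (T ∪ Fᶜ) = univ :=
    eq_univ_of_univ_subset (hcl ▸ closure_mono h1)
  have h3 : x ∈ F ∩ @closure X t2 (T ∪ Fᶜ) := ⟨hx, h2 ▸ mem_univ x⟩
  have h4 := hFo2.inter_closure h3
  have h5 : F ∩ (T ∪ Fᶜ) ⊆ T := by
    rintro y ⟨hyF, hyT | hyc⟩
    · exact hyT
    · exact absurd hyF hyc
  exact closure_mono h5 h4

theorem stmt16 (t1 t2 : TopologicalSpace X) (hW : IjWeaklyLindelof t1 t2)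
    (F : Set X) (hFo : IsOpen[t1] F) (hFc : IsClosed[t1] F) (hFo2 : IsOpen[t2] F) :
    IjRelWeaklyLindelof t1 t2 F ∧
      IjWeaklyLindelof (t1.induced (Subtype.val : F → X))
        (t2.induced (Subtype.val : F → X)) := by
  have hrel : IjRelWeaklyLindelof t1 t2 F := aux_rel t1 t2 hW F hFc hFo2
  refine ⟨hrel, ?_⟩
  intro ι U hU hUu
  letI := t2
  have hW' : ∀ a, ∃ W : Set X, IsOpen[t1] W ∧ (Subtype.val : F → X) ⁻¹' W = U a := by
    intro a
    exact (@isOpen_induced_iff F X t1 (U a) Subtype.val).1 (hU a)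
  choose W hWo hWU using hW'
  have hcov : F ⊆ ⋃ a, W a := by
    intro x hx
    have h : (⟨x, hx⟩ : F) ∈ ⋃ a, U a := hUu ▸ mem_univ _
    obtain ⟨a, ha⟩ := mem_iUnion.1 h
    rw [← hWU a] at ha
    exact mem_iUnion.2 ⟨a, ha⟩
  obtain ⟨s, hs, hsub⟩ := hrel W hWo hcov
  refine ⟨s, hs, eq_univ_of_forall fun x => ?_⟩
  rw [closure_induced]
  have hx2 : (x : X) ∈ F ∩ @closure X t2 (⋃ a ∈ s, W a) := ⟨x.2, hsub x.2⟩
  have h4 := hFo2.inter_closure hx2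
  refine closure_mono ?_ h4
  rintro y ⟨hyF, hyW⟩
  simp only [mem_iUnion] at hyW
  obtain ⟨a, ha, hya⟩ := hyW
  refine ⟨⟨y, hyF⟩, ?_, rfl⟩
  exact mem_iUnion₂.2 ⟨a, ha, by rw [← hWU a]; exact hya⟩
end
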